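/- Let W be a real symmetric N×N matrix with eigenvalues d₁ ≤ ... ≤ d_N. If for every eigenvalue d of W it holds that (λ² - ρ²)d² - 2(λ + γρ)d + (1 - γ²) > 0, and additionally 1 - λd ≠ 0 for every eigenvalue d of W, then each eigenvalue of A(θ) = (ρW + γI)(I - λW)⁻¹ has absolute value strictly less than 1. -/

import Mathlib

open Matrix

theorem stmt4 {N : ℕ} (W : Matrix (Fin N) (Fin N) ℝ) (hW : W.IsSymm)
    (lam rho gam : ℝ)
    (A : Matrix (Fin N) (Fin N) ℝ)
    (hA : A = (rho • W + gam • 1) * (1 - lam • W)⁻¹)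
    (hquad : ∀ d ∈ spectrum ℝ W,
      (lam ^ 2 - rho ^ 2) * d ^ 2 - 2 * (lam + gam * rho) * d + (1 - gam ^ 2) > 0)
    (hlam : ∀ d ∈ spectrum ℝ W, 1 - lam * d ≠ 0) :
    ∀ μ ∈ spectrum ℝ A, |μ| < 1 := by
  have hH : W.IsHermitian := by
    rwa [Matrix.IsHermitian, conjTranspose_eq_transpose_of_trivial]
  set U : Matrix.unitaryGroup (Fin N) ℝ := hH.eigenvectorUnitary with hU
  set d : Fin N → ℝ := hH.eigenvalues with hd
  have hspec : W = (U : Matrix (Fin N) (Fin N) ℝ) * diagonal d * star (U : Matrix (Fin N) (Fin N) ℝ) := by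
    simpa using hH.spectral_theorem
  have hmem : ∀ i, d i ∈ spectrum ℝ W := fun i => hH.eigenvalues_mem_spectrum_real i
  have hdne : ∀ i, 1 - lam * d i ≠ 0 := fun i => hlam _ (hmem i)
  have hsU : star (U : Matrix (Fin N) (Fin N) ℝ) * U = 1 := by
    exact_mod_cast Unitary.coe_star_mul_self U
  have hUs : (U : Matrix (Fin N) (Fin N) ℝ) * star (U : Matrix (Fin N) (Fin N) ℝ) = 1 := by
    exact_mod_cast Unitary.coe_mul_star_self U
  -- 1 - lam • W
  have h1 : 1 - lam • W = (U : Matrix (Fin N) (Fin N) ℝ) * diagonal (fun i => 1 - lam * d i) * star (U : Matrix (Fin N) (Fin N) ℝ) := by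
    have : (diagonal (fun i => 1 - lam * d i) : Matrix (Fin N) (Fin N) ℝ)
        = 1 - lam • diagonal d := by
      ext i j
      by_cases h : i = j <;> simp [h, diagonal_apply, Matrix.one_apply]
    rw [this]
    rw [hspec]
    simp [Matrix.sub_mul, Matrix.mul_sub, hUs, Matrix.mul_smul, Matrix.smul_mul, mul_assoc]
  have hinv : (1 - lam • W)⁻¹ = (U : Matrix (Fin N) (Fin N) ℝ) * diagonal (fun i => (1 - lam * d i)⁻¹) * star (U : Matrix (Fin N) (Fin N) ℝ) := by
    apply Matrix.inv_eq_right_inv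
    rw [h1]
    simp only [Matrix.mul_assoc]
    rw [← Matrix.mul_assoc (star (U : Matrix (Fin N) (Fin N) ℝ)) (U : Matrix (Fin N) (Fin N) ℝ), hsU, Matrix.one_mul,
      ← Matrix.mul_assoc (diagonal fun i => 1 - lam * d i), diagonal_mul_diagonal]
    have : (fun i => (1 - lam * d i) * (1 - lam * d i)⁻¹) = fun _ => (1:ℝ) := by
      funext i; exact mul_inv_cancel₀ (hdne i)
    rw [this, diagonal_one, Matrix.one_mul, hUs]
  have hAeq : A = (U : Matrix (Fin N) (Fin N) ℝ) * diagonal (fun i => (rho * d i + gam) * (1 - lam * d i)⁻¹) * star (U : Matrix (Fin N) (Fin N) ℝ) := by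
    have h2 : rho • W + gam • 1 = (U : Matrix (Fin N) (Fin N) ℝ) * diagonal (fun i => rho * d i + gam) * star (U : Matrix (Fin N) (Fin N) ℝ) := by
      have : (diagonal (fun i => rho * d i + gam) : Matrix (Fin N) (Fin N) ℝ)
          = rho • diagonal d + gam • 1 := by
        ext i j
        by_cases h : i = j <;> simp [h, diagonal_apply, Matrix.one_apply]
      rw [this, hspec]
      simp [Matrix.add_mul, Matrix.mul_add, hUs, Matrix.mul_smul, Matrix.smul_mul, mul_assoc]
    rw [hA, h2, hinv]
    simp only [Matrix.mul_assoc]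
    rw [← Matrix.mul_assoc (star (U : Matrix (Fin N) (Fin N) ℝ)) (U : Matrix (Fin N) (Fin N) ℝ), hsU, Matrix.one_mul,
      ← Matrix.mul_assoc (diagonal fun i => rho * d i + gam), diagonal_mul_diagonal]
  have hspecA : spectrum ℝ A = Set.range (fun i => (rho * d i + gam) * (1 - lam * d i)⁻¹) := by
    rw [hAeq]
    rw [show ((U : Matrix (Fin N) (Fin N) ℝ) * diagonal (fun i => (rho * d i + gam) * (1 - lam * d i)⁻¹) * star (U : Matrix (Fin N) (Fin N) ℝ)) = ((U : unitary (Matrix (Fin N) (Fin N) ℝ)) : Matrix (Fin N) (Fin N) ℝ) * diagonal (fun i => (rho * d i + gam) * (1 - lam * d i)⁻¹) * (star (U : unitary (Matrix (Fin N) (Fin N) ℝ)) : Matrix (Fin N) (Fin N) ℝ) from rfl]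
    rw [Unitary.spectrum_star_right_conjugate, spectrum_diagonal]
  intro μ hμ
  rw [hspecA] at hμ
  obtain ⟨i, hi⟩ := hμ
  have hq := hquad _ (hmem i)
  have key : (rho * d i + gam) ^ 2 < (1 - lam * d i) ^ 2 := by nlinarith
  have habs : |rho * d i + gam| < |1 - lam * d i| := by
    nlinarith [abs_nonneg (rho * d i + gam), abs_nonneg (1 - lam * d i),
      sq_abs (rho * d i + gam), sq_abs (1 - lam * d i)]
  have hy : 0 < |1 - lam * d i| := abs_pos.mpr (hdne i)
  rw [← hi, abs_mul, abs_inv]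
  calc |rho * d i + gam| * |1 - lam * d i|⁻¹
      < |1 - lam * d i| * |1 - lam * d i|⁻¹ := by
        exact mul_lt_mul_of_pos_right habs (inv_pos.mpr hy)
    _ = 1 := mul_inv_cancel₀ hy.ne'
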